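/- Let m ≥ 3 be an integer, let G be a finite simple graph, let C ⊆ V(G) be an m-fold dominating set of G such that G[C] is 2-connected, and let U ⊆ V(G)∖C. If S is a 2-separator of G[C ∪ U] (i.e., |S| = 2 and the induced subgraph G[(C ∪ U)∖S] is disconnected), then S ⊆ C and S is also a 2-separator of G[C] (i.e., G[C∖S] is disconnected). -/

import Mathlib

/-!
If `G[C \ S]` were connected, so would be `G[(C ∪ U) \ S]`: a vertex outside `C` has at least
`m ≥ 3` neighbours in `C`, so one of them survives the deletion of the two vertices of `S`.
Hence `S` separates `G[C]`, and as `G[C]` is 2-connected, both vertices of `S` must lie in `C`.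
-/

/-- A graph `H` is `k`-connected if it has more than `k` vertices and, for every
set `S` of fewer than `k` vertices, deleting `S` leaves a connected graph. -/
def KConnected {W : Type*} (H : SimpleGraph W) (k : ℕ) : Prop :=
  k < Nat.card W ∧ ∀ S : Set W, S.ncard < k → (H.induce Sᶜ).Connected

/-- `C` is an `m`-fold dominating set of `G` if every vertex outside `C`
has at least `m` neighbors in `C`. -/
def MFoldDominating {V : Type*} (G : SimpleGraph V) (m : ℕ) (C : Set V) : Prop :=
  ∀ v : V, v ∉ C → m ≤ {u ∈ C | G.Adj v u}.ncard

section

variable {V : Type*} {G : SimpleGraph V}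

lemma SimpleGraph.Connected.induce_of_forall_exists_adj {A B : Set V}
    (hA : (G.induce A).Connected) (hAB : A ⊆ B) (hadj : ∀ v ∈ B \ A, ∃ w ∈ A, G.Adj v w) :
    (G.induce B).Connected := by
  obtain ⟨a⟩ := hA.nonempty
  have reach (w : A) : (G.induce B).Reachable (Set.inclusion hAB a) (Set.inclusion hAB w) :=
    (hA.preconnected a w).map (G.induceHomOfLE hAB).toHom
  refine (SimpleGraph.connected_iff_exists_forall_reachable _).mpr
    ⟨Set.inclusion hAB a, fun ⟨v, hvB⟩ => ?_⟩
  by_cases hvA : v ∈ A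
  · exact reach ⟨v, hvA⟩
  · obtain ⟨w, hwA, hvw⟩ := hadj v ⟨hvB, hvA⟩
    exact (reach ⟨w, hwA⟩).trans (SimpleGraph.Adj.reachable (G := G.induce B) hvw.symm)

lemma KConnected.connected_induce_diff {k : ℕ} {C S : Set V} (hC : KConnected (G.induce C) k)
    (hS : (C ∩ S).ncard < k) : (G.induce (C \ S)).Connected := by
  have hpre : ((Subtype.val : C → V) ⁻¹' S).ncard < k := by
    rwa [← Subtype.preimage_coe_self_inter,
      Set.ncard_preimage_of_injective_subset_range Subtype.val_injective (by simp)]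
  exact (hC.2 _ hpre).map ⟨fun x => ⟨x.1.1, x.1.2, x.2⟩, id⟩
    fun v => ⟨⟨⟨v.1, v.2.1⟩, v.2.2⟩, rfl⟩

lemma MFoldDominating.exists_adj_mem_diff {m : ℕ} {C S : Set V} (hdom : MFoldDominating G m C)
    (hSfin : S.Finite) (hSm : S.ncard < m) {v : V} (hv : v ∉ C) : ∃ w ∈ C \ S, G.Adj v w := by
  by_contra! hnone
  have hsub : {u ∈ C | G.Adj v u} ⊆ S := fun u ⟨huC, hvu⟩ => by
    by_contra huS
    exact hnone u ⟨huC, huS⟩ hvu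
  have := Set.ncard_le_ncard hsub hSfin
  have := hdom v hv
  omega

end

theorem two_separator_comes_from_C_general {V : Type*} (G : SimpleGraph V)
    (m : ℕ) (hm : 3 ≤ m) (C : Set V) (hdom : MFoldDominating G m C)
    (h2 : KConnected (G.induce C) 2) (U : Set V)
    (S : Set V) (hScard : S.ncard = 2)
    (hdisc : ¬ (G.induce ((C ∪ U) \ S)).Connected) :
    S ⊆ C ∧ ¬ (G.induce (C \ S)).Connected := by
  have hSfin : S.Finite := Set.finite_of_ncard_ne_zero (by omega)
  have hsep : ¬ (G.induce (C \ S)).Connected := fun hconn =>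
    hdisc <| hconn.induce_of_forall_exists_adj (Set.sdiff_subset_sdiff_left Set.subset_union_left)
      fun v ⟨⟨_, hvS⟩, hvCS⟩ =>
        hdom.exists_adj_mem_diff hSfin (by omega) fun hvC => hvCS ⟨hvC, hvS⟩
  refine ⟨fun s hs => ?_, hsep⟩
  by_contra hsC
  refine hsep (h2.connected_induce_diff ?_)
  calc (C ∩ S).ncard ≤ (S \ {s}).ncard :=
        Set.ncard_le_ncard (fun x hx => ⟨hx.2, by rintro rfl; exact hsC hx.1⟩) hSfin.sdiff
    _ < 2 := by rw [Set.ncard_sdiff_singleton_of_mem hs]; omega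

/-- Let `m ≥ 3`, let `C` be an `m`-fold dominating set of `G` with `G[C]`
2-connected, and let `U ⊆ V(G) \ C`. Every 2-separator `S` of `G[C ∪ U]`
satisfies `S ⊆ C` and is also a 2-separator of `G[C]`. -/
theorem two_separator_comes_from_C {V : Type*} [Fintype V] (G : SimpleGraph V)
    (m : ℕ) (hm : 3 ≤ m) (C : Set V) (hdom : MFoldDominating G m C)
    (h2 : KConnected (G.induce C) 2) (U : Set V) (hU : U ⊆ Cᶜ)
    (S : Set V) (hSsub : S ⊆ C ∪ U) (hScard : S.ncard = 2)
    (hdisc : ¬ (G.induce ((C ∪ U) \ S)).Connected) :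
    S ⊆ C ∧ ¬ (G.induce (C \ S)).Connected :=
  two_separator_comes_from_C_general G m hm C hdom h2 U S hScard hdisc
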